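/- The function V_m(t) = (1−e^{−t})²·e^{2e^{−t}−2}·e^{−mt} satisfies, for every m ≥ 1, the evolution equation dV_m/dt = −m·V_m + 2·∑_{n≥m+2} V_n, with lim_{t→0} t^{−2}·e^{mt}·V_m(t) = 1. Consequently π₀(t) = ∑_{m≥1} m·V_m(t) = e^{−t}·e^{2e^{−t}−2}. -/

import Mathlib

/-!
With `x = e^{-t}` one has `V_m = (1 - x)² e^{2x-2} xᵐ`. The tail `∑_{n ≥ m+2} V_n` is geometric,
equal to `(1 - x) e^{2x-2} x^{m+2}`, which is exactly what remains of `dV_m/dt + m V_m` once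
`dx/dt = -x` is used; the initial behaviour comes from `(1 - e^{-t}) / t → 1`; and
`∑ m xᵐ = x / (1 - x)²` cancels the prefactor `(1 - x)²` in `π₀`.
-/

open Real Filter

/-- Void density for model B random sequential covering of ℤ by trimers:
`V_m(t) = (1-e^{-t})² e^{2e^{-t}-2} e^{-mt}`. -/
noncomputable def trimerVoidB (m : ℕ) (t : ℝ) : ℝ :=
  (1 - Real.exp (-t)) ^ 2 * Real.exp (2 * Real.exp (-t) - 2) * Real.exp (-(m : ℝ) * t)

open Topology

theorem tsum_pow_add_of_norm_lt_one {𝕜 : Type*} [NormedDivisionRing 𝕜] [CompleteSpace 𝕜]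
    {r : 𝕜} (hr : ‖r‖ < 1) (n : ℕ) :
    ∑' k : ℕ, r ^ (n + k) = r ^ n * (1 - r)⁻¹ := by
  simp_rw [pow_add, tsum_mul_left, tsum_geometric_of_norm_lt_one hr]

theorem tsum_succ_mul_pow_succ_of_norm_lt_one {𝕜 : Type*} [NormedField 𝕜] [CompleteSpace 𝕜]
    {r : 𝕜} (hr : ‖r‖ < 1) :
    ∑' n : ℕ, ((n : 𝕜) + 1) * r ^ (n + 1) = r / (1 - r) ^ 2 := by
  have h := (hasSum_nat_add_iff' (f := fun n : ℕ => (n : 𝕜) * r ^ n) 1).mpr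
    (hasSum_coe_mul_geometric_of_norm_lt_one hr)
  rw [Finset.sum_range_one, Nat.cast_zero, zero_mul, sub_zero] at h
  exact_mod_cast h.tsum_eq

theorem Real.exp_neg_lt_one {t : ℝ} (ht : 0 < t) : exp (-t) < 1 :=
  exp_lt_one_iff.2 (neg_lt_zero.2 ht)

theorem tendsto_one_sub_exp_neg_div :
    Tendsto (fun t : ℝ => (1 - exp (-t)) / t) (𝓝[>] 0) (𝓝 1) := by
  have h : HasDerivAt (fun t : ℝ => 1 - exp (-t)) 1 0 := by
    simpa using ((hasDerivAt_neg (0 : ℝ)).exp).const_sub 1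
  simpa [div_eq_inv_mul] using h.tendsto_slope_zero_right

namespace trimerVoidB

theorem eq_pow (m : ℕ) (t : ℝ) :
    trimerVoidB m t = (1 - exp (-t)) ^ 2 * exp (2 * exp (-t) - 2) * exp (-t) ^ m := by
  rw [trimerVoidB, ← Real.exp_nat_mul]
  ring_nf

theorem hasDerivAt (m : ℕ) (t : ℝ) :
    HasDerivAt (trimerVoidB m)
      (-(m : ℝ) * trimerVoidB m t
        + 2 * ((1 - exp (-t)) * exp (2 * exp (-t) - 2) * exp (-t) ^ (m + 2))) t := by
  have hx : HasDerivAt (fun t => exp (-t)) (exp (-t) * -1) t := (hasDerivAt_neg t).exp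
  have h := ((((hx.const_sub 1).fun_pow 2).fun_mul (((hx.const_mul 2).sub_const 2).exp)).fun_mul
    (((hasDerivAt_id' t).const_mul (-(m : ℝ))).exp))
  refine h.congr_deriv ?_
  rw [eq_pow, pow_add, ← Real.exp_nat_mul]
  ring_nf

theorem tsum_tail (m : ℕ) {t : ℝ} (ht : 0 < t) :
    ∑' k : ℕ, trimerVoidB (m + 2 + k) t
      = (1 - exp (-t)) * exp (2 * exp (-t) - 2) * exp (-t) ^ (m + 2) := by
  have hx := exp_neg_lt_one ht
  have hx1 : 1 - exp (-t) ≠ 0 := (sub_pos.2 hx).ne'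
  simp_rw [eq_pow, tsum_mul_left,
    tsum_pow_add_of_norm_lt_one (by rwa [norm_of_nonneg (exp_pos _).le])]
  field_simp

theorem tendsto_mul_exp_div_sq (m : ℕ) :
    Tendsto (fun t : ℝ => trimerVoidB m t * exp ((m : ℝ) * t) / t ^ 2) (𝓝[>] 0) (𝓝 1) := by
  have hc : Tendsto (fun t : ℝ => exp (2 * exp (-t) - 2)) (𝓝[>] 0) (𝓝 1) := by
    have : Continuous (fun t : ℝ => exp (2 * exp (-t) - 2)) := by fun_prop
    simpa using (this.tendsto 0).mono_left nhdsWithin_le_nhds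
  have h := (tendsto_one_sub_exp_neg_div.pow 2).mul hc
  rw [one_pow, one_mul] at h
  refine h.congr' ?_
  filter_upwards [self_mem_nhdsWithin] with t (ht : 0 < t)
  rw [trimerVoidB, mul_assoc _ (exp _), ← Real.exp_add]
  field_simp
  simp

theorem tsum_succ_mul (t : ℝ) (ht : 0 < t) :
    ∑' n : ℕ, ((n : ℝ) + 1) * trimerVoidB (n + 1) t = exp (-t) * exp (2 * exp (-t) - 2) := by
  have hx := exp_neg_lt_one ht
  have hx1 : 1 - exp (-t) ≠ 0 := (sub_pos.2 hx).ne'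
  simp_rw [eq_pow, mul_left_comm _ ((1 - exp (-t)) ^ 2 * _), tsum_mul_left,
    tsum_succ_mul_pow_succ_of_norm_lt_one (by rwa [norm_of_nonneg (exp_pos _).le])]
  field_simp

end trimerVoidB

/-- `V_m(t) = (1-e^{-t})² e^{2e^{-t}-2} e^{-mt}` satisfies, for every `m ≥ 1`, the model B
trimer evolution equation `dV_m/dt = -m V_m + 2 ∑_{n≥m+2} V_n` with `t⁻² e^{mt} V_m(t) → 1`
as `t → 0⁺`; consequently the uncovered density is
`π₀(t) = ∑_{m≥1} m V_m(t) = e^{-t} e^{2e^{-t}-2}`. -/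
theorem trimer_modelB_voids :
    (∀ m : ℕ, 1 ≤ m →
      (∀ t : ℝ, 0 < t →
        HasDerivAt (trimerVoidB m)
          (-(m : ℝ) * trimerVoidB m t + 2 * ∑' k : ℕ, trimerVoidB (m + 2 + k) t) t) ∧
      Tendsto (fun t : ℝ => trimerVoidB m t * Real.exp ((m : ℝ) * t) / t ^ 2)
        (nhdsWithin 0 (Set.Ioi 0)) (nhds 1)) ∧
    (∀ t : ℝ, 0 < t →
      ∑' n : ℕ, ((n : ℝ) + 1) * trimerVoidB (n + 1) t
        = Real.exp (-t) * Real.exp (2 * Real.exp (-t) - 2)) := by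
  refine ⟨fun m _ => ⟨fun t ht => ?_, trimerVoidB.tendsto_mul_exp_div_sq m⟩,
    trimerVoidB.tsum_succ_mul⟩
  rw [trimerVoidB.tsum_tail m ht]
  exact trimerVoidB.hasDerivAt m t
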